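/- For every positive integer n, the combination 1 - (n+6)/[2] + (n+11)/[2,2] + 4n/[2,3] + 2/[2,4] - 8/[2,2,2] - 8/[2,4,6] - (8n-4)/[2,3,4] equals D_n(t)/P_n(t) as rational functions, where [k] = 1 + t + ... + t^{k-1}, [k,l] = [k][l], etc., P_n(t) = (t+1)^3 (t^2+1)(t^2-t+1)(t^2+t+1), and D_n(t) = t^9 - (n+3)t^8 - (n-4)t^7 + (2n-8)t^6 + (2n+8)t^5 + (2n-8)t^4 - (2n-11)t^3 + (3n-5)t^2 + (3n+4)t - 4(n+1). -/

import Mathlib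

set_option maxHeartbeats 4000000


open Polynomial

/-- `[k] = 1 + t + ⋯ + t^(k-1)` as an element of the field of rational functions `ℚ(t)`. -/
noncomputable def br (k : ℕ) : RatFunc ℚ :=
  algebraMap (Polynomial ℚ) (RatFunc ℚ) (∑ i ∈ Finset.range k, X ^ i)

/-- The numerator polynomial `P_n(t)` (independent of `n`). -/
noncomputable def Ppoly : Polynomial ℚ :=
  (X + C 1) ^ 3 * (X ^ 2 + C 1) * (X ^ 2 - X + C 1) * (X ^ 2 + X + C 1)

/-- The denominator polynomial `D_n(t)`. -/
noncomputable def Dpoly (n : ℕ) : Polynomial ℚ :=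
  X ^ 9 - C ((n : ℚ) + 3) * X ^ 8 - C ((n : ℚ) - 4) * X ^ 7 + C (2 * (n : ℚ) - 8) * X ^ 6
    + C (2 * (n : ℚ) + 8) * X ^ 5 + C (2 * (n : ℚ) - 8) * X ^ 4 - C (2 * (n : ℚ) - 11) * X ^ 3
    + C (3 * (n : ℚ) - 5) * X ^ 2 + C (3 * (n : ℚ) + 4) * X - C (4 * ((n : ℚ) + 1))

theorem stmt_13 (n : ℕ) (hn : 0 < n) :
    1 - ((n : RatFunc ℚ) + 6) / br 2 + ((n : RatFunc ℚ) + 11) / (br 2 * br 2)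
        + 4 * (n : RatFunc ℚ) / (br 2 * br 3) + 2 / (br 2 * br 4)
        - 8 / (br 2 * br 2 * br 2) - 8 / (br 2 * br 4 * br 6)
        - (8 * (n : RatFunc ℚ) - 4) / (br 2 * br 3 * br 4)
      = algebraMap (Polynomial ℚ) (RatFunc ℚ) (Dpoly n)
          / algebraMap (Polynomial ℚ) (RatFunc ℚ) Ppoly := by
  set x : RatFunc ℚ := algebraMap (Polynomial ℚ) (RatFunc ℚ) X with hx
  have hbr : ∀ k, br k = ∑ i ∈ Finset.range k, x ^ i := by
    intro k; simp [br, hx, map_sum, map_pow]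
  have hne : ∀ k : ℕ, 0 < k → br k ≠ 0 := by
    intro k hk
    apply RatFunc.algebraMap_ne_zero
    intro h
    have h1 := congrArg (Polynomial.eval 1) h
    simp [Polynomial.eval_finset_sum] at h1
    have : (k : ℚ) = 0 := by simpa using h1
    exact hk.ne' (by exact_mod_cast this)
  have h2 := hne 2 (by norm_num)
  have h3 := hne 3 (by norm_num)
  have h4 := hne 4 (by norm_num)
  have h6 := hne 6 (by norm_num)
  have hP : algebraMap (Polynomial ℚ) (RatFunc ℚ) Ppoly ≠ 0 := by
    apply RatFunc.algebraMap_ne_zero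
    intro h
    have h1 := congrArg (Polynomial.eval 1) h
    norm_num [Ppoly] at h1
  rw [hbr] at h2 h3 h4 h6
  simp only [hbr, Finset.sum_range_succ, Finset.sum_range_zero, zero_add, pow_zero, pow_one]
    at h2 h3 h4 h6 ⊢
  have hP' : (x + 1) ^ 3 * (x ^ 2 + 1) * (x ^ 2 - x + 1) * (x ^ 2 + x + 1) ≠ 0 := by
    simpa only [Ppoly, map_add, map_sub, map_mul, map_pow, map_one, RatFunc.algebraMap_C,
      ← hx] using hP
  rw [Dpoly, Ppoly]
  simp only [map_add, map_sub, map_mul, map_pow, map_one, map_ofNat, RatFunc.algebraMap_C, map_natCast, ← hx]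
  set P : RatFunc ℚ := (x + 1) ^ 3 * (x ^ 2 + 1) * (x ^ 2 - x + 1) * (x ^ 2 + x + 1) with hPdef
  have e0 : (1 : RatFunc ℚ) = P / P := (div_self hP').symm
  have e1 : ((n : RatFunc ℚ) + 6) / (1 + x)
      = (((n : RatFunc ℚ) + 6) * ((x + 1) ^ 2 * (x ^ 2 + 1) * (x ^ 2 - x + 1) * (x ^ 2 + x + 1))) / P := by
    rw [div_eq_div_iff h2 hP', hPdef]; ring
  have e2 : ((n : RatFunc ℚ) + 11) / ((1 + x) * (1 + x))
      = (((n : RatFunc ℚ) + 11) * ((x + 1) * (x ^ 2 + 1) * (x ^ 2 - x + 1) * (x ^ 2 + x + 1))) / P := by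
    rw [div_eq_div_iff (mul_ne_zero h2 h2) hP', hPdef]; ring
  have e3 : 4 * (n : RatFunc ℚ) / ((1 + x) * (1 + x + x ^ 2))
      = (4 * (n : RatFunc ℚ) * ((x + 1) ^ 2 * (x ^ 2 + 1) * (x ^ 2 - x + 1))) / P := by
    rw [div_eq_div_iff (mul_ne_zero h2 h3) hP', hPdef]; ring
  have e4 : (2 : RatFunc ℚ) / ((1 + x) * (1 + x + x ^ 2 + x ^ 3))
      = (2 * ((x + 1) * (x ^ 2 - x + 1) * (x ^ 2 + x + 1))) / P := by
    rw [div_eq_div_iff (mul_ne_zero h2 h4) hP', hPdef]; ring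
  have e5 : (8 : RatFunc ℚ) / ((1 + x) * (1 + x) * (1 + x))
      = (8 * ((x ^ 2 + 1) * (x ^ 2 - x + 1) * (x ^ 2 + x + 1))) / P := by
    rw [div_eq_div_iff (mul_ne_zero (mul_ne_zero h2 h2) h2) hP', hPdef]; ring
  have e6 : (8 : RatFunc ℚ) / ((1 + x) * (1 + x + x ^ 2 + x ^ 3) * (1 + x + x ^ 2 + x ^ 3 + x ^ 4 + x ^ 5))
      = (8 : RatFunc ℚ) / P := by
    rw [div_eq_div_iff (mul_ne_zero (mul_ne_zero h2 h4) h6) hP', hPdef]; ring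
  have e7 : (8 * (n : RatFunc ℚ) - 4) / ((1 + x) * (1 + x + x ^ 2) * (1 + x + x ^ 2 + x ^ 3))
      = ((8 * (n : RatFunc ℚ) - 4) * ((x + 1) * (x ^ 2 - x + 1))) / P := by
    rw [div_eq_div_iff (mul_ne_zero (mul_ne_zero h2 h3) h4) hP', hPdef]; ring
  rw [e1, e2, e3, e4, e5, e6, e7]
  nth_rewrite 1 [e0]
  simp only [← add_div, div_sub_div_same]
  rw [div_eq_div_iff hP' hP', hPdef]
  ring
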